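/- For any sequence (k_i)_{i∈ℤ} ⊂ ℤ ∪ {∞} that is bounded below, the 𝒪-submodule B = Σ_{i∈ℤ} 𝔭^{k_i} t^i of K{{t}} is bounded for the higher topology; conversely, every bounded subset of K{{t}} is contained in a submodule of this form. Hence these submodules form a basis of the Von-Neumann bornology of K{{t}}. -/

import Mathlib

/-!
Common setting: `K` is a characteristic-zero local field (a finite extension of `ℚ_p`)
with ring of integers `𝒪 = {c : K | ‖c‖ ≤ 1}`, maximal ideal `𝔭 = {c : K | ‖c‖ < 1}`,
residue field of cardinality `q` and the absolute value normalised by `‖π‖ = q⁻¹`.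
We formalise the two-dimensional local fields `K((t))` (as `LaurentSeries K`) and
`K{{t}}` (as the submodule `mixedCarrier K` of `ℤ → K`), their higher topologies, and
the relevant functional-analytic notions (lattices, seminorms, boundedness,
c-compactness, compactoidness, completeness for nets, duality).
-/

open Filter Topology Set Pointwise
open scoped Classical

noncomputable section

namespace TwoDimLF

variable (K : Type) [NontriviallyNormedField K]

/-- `K` is a characteristic-zero nonarchimedean local field: the norm is nonarchimedean,
takes the values `q^ℤ` on `K˟` (with a uniformizer of norm `q⁻¹`), `K` is complete, locally
compact, of characteristic zero, and the residue field has exactly `q` elements. -/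
structure IsCharZeroLocalField (q : ℕ) : Prop where
  nonarch : ∀ x y : K, ‖x + y‖ ≤ max ‖x‖ ‖y‖
  one_lt_q : 1 < q
  norm_values : ∀ x : K, x ≠ 0 → ∃ n : ℤ, ‖x‖ = (q : ℝ) ^ (-n)
  exists_uniformizer : ∃ π : K, ‖π‖ = ((q : ℝ))⁻¹
  charZero : CharZero K
  locallyCompact : LocallyCompactSpace K
  complete : CompleteSpace K
  residue_card : ∃ s : Finset K, s.card = q ∧
    ∀ x : K, ‖x‖ ≤ 1 → ∃! y, y ∈ s ∧ ‖x - y‖ < 1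

/-- The fractional ideal `𝔭^n ⊆ K` for `n ∈ ℤ ∪ {-∞}`, with the convention `𝔭^(-∞) = K`. -/
def pB (q : ℕ) (n : WithBot ℤ) : Set K :=
  WithBot.recBotCoe Set.univ (fun m : ℤ => {x : K | ‖x‖ ≤ (q : ℝ) ^ (-m)}) n

/-- The fractional ideal `𝔭^n ⊆ K` for `n ∈ ℤ ∪ {∞}`, with the convention `𝔭^∞ = {0}`. -/
def pT (q : ℕ) (n : WithTop ℤ) : Set K :=
  WithTop.recTopCoe {0} (fun m : ℤ => {x : K | ‖x‖ ≤ (q : ℝ) ^ (-m)}) n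

/-- The fractional ideal `𝔭^n ⊆ K` for `n ∈ ℤ ∪ {±∞}`. -/
def pE (q : ℕ) (n : WithBot (WithTop ℤ)) : Set K :=
  WithBot.recBotCoe Set.univ (fun m : WithTop ℤ => pT K q m) n

/-- `q ^ n ∈ ℝ` for `n ∈ ℤ ∪ {-∞}`, with the convention `q^(-∞) = 0`. -/
def qpow (q : ℕ) (n : WithBot ℤ) : ℝ :=
  WithBot.recBotCoe 0 (fun m : ℤ => (q : ℝ) ^ m) n

/-- `1 - k` for `k ∈ ℤ ∪ {±∞}` (so `1 - (±∞) = ∓∞`). -/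
def oneSubE : WithBot (WithTop ℤ) → WithBot (WithTop ℤ) :=
  WithBot.recBotCoe ((⊤ : WithTop ℤ) : WithBot (WithTop ℤ))
    (WithTop.recTopCoe (⊥ : WithBot (WithTop ℤ))
      (fun z : ℤ => (((1 - z : ℤ) : WithTop ℤ) : WithBot (WithTop ℤ))))

section LCS

variable {V : Type} [AddCommGroup V] [Module K V]

/-- `S` is an `𝒪`-submodule of the `K`-vector space `V`, where `𝒪 = {c : K | ‖c‖ ≤ 1}`
is the ring of integers of `K`. -/
def IsOSubmodule (S : Set V) : Prop :=
  (0 : V) ∈ S ∧ (∀ x ∈ S, ∀ y ∈ S, x + y ∈ S) ∧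
    ∀ c : K, ‖c‖ ≤ 1 → ∀ x ∈ S, c • x ∈ S

/-- `S` is an `𝒪`-lattice in `V`: an `𝒪`-submodule such that every vector is carried
into `S` by some nonzero scalar. -/
def IsLatticeSet (S : Set V) : Prop :=
  IsOSubmodule K S ∧ ∀ v : V, ∃ a : K, a ≠ 0 ∧ a • v ∈ S

/-- A (nonarchimedean) seminorm on the `K`-vector space `V`. -/
def IsSeminorm (N : V → ℝ) : Prop :=
  (∀ (c : K) (v : V), N (c • v) = ‖c‖ * N v) ∧ ∀ v w : V, N (v + w) ≤ max (N v) (N w)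

/-- The gauge seminorm of a lattice `Λ ⊆ V`: `‖v‖_Λ = inf {‖a‖ : v ∈ aΛ}`. -/
def gaugeSeminorm (Λ : Set V) (v : V) : ℝ :=
  sInf {r : ℝ | ∃ a : K, v ∈ a • Λ ∧ r = ‖a‖}

/-- The group topology on `W` determined by a family `B` of neighbourhoods of zero:
neighbourhoods of `x` are generated by the translates `x + U`, `U ∈ B`. -/
def addTopologyOf {W : Type} [AddCommGroup W] (B : Set (Set W)) : TopologicalSpace W :=
  TopologicalSpace.mkOfNhds fun x => Filter.map (fun v => x + v) (⨅ U ∈ B, Filter.principal U)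

/-- `B` is (Von-Neumann) bounded for the locally convex topology `τ`: every open lattice
absorbs it. -/
def IsVNBounded (τ : TopologicalSpace V) (B : Set V) : Prop :=
  ∀ Λ : Set V, IsLatticeSet K Λ → IsOpen[τ] Λ → ∃ a : K, B ⊆ a • Λ

/-- The `𝒪`-submodule `A ⊆ V` is c-compact: for every decreasing filtered family of open
lattices `L i`, the canonical map `A → lim A/(L i ∩ A)` is surjective (phrased via
compatible families of representatives). -/
def IsCCompact (τ : TopologicalSpace V) (A : Set V) : Prop :=
  ∀ (ι : Type) (L : ι → Set V),
    (∀ i, IsLatticeSet K (L i) ∧ IsOpen[τ] (L i)) →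
    (∀ i j, ∃ k, L k ⊆ L i ∧ L k ⊆ L j) →
    ∀ x : ι → V, (∀ i, x i ∈ A) →
      (∀ i j, L j ⊆ L i → x j - x i ∈ L i) →
      ∃ a ∈ A, ∀ i, a - x i ∈ L i

/-- The `𝒪`-submodule `A ⊆ V` is compactoid: for every open lattice `Λ` there are finitely
many vectors `v₁, …, v_m ∈ V` with `A ⊆ Λ + 𝒪v₁ + ⋯ + 𝒪v_m`. -/
def IsCompactoid (τ : TopologicalSpace V) (A : Set V) : Prop :=
  ∀ Λ : Set V, IsLatticeSet K Λ → IsOpen[τ] Λ →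
    ∃ (m : ℕ) (v : Fin m → V),
      A ⊆ {u : V | ∃ l ∈ Λ, ∃ c : Fin m → K, (∀ j, ‖c j‖ ≤ 1) ∧ u = l + ∑ j, c j • v j}

/-- `A ⊆ V` is complete: every Cauchy net with values in `A` converges to a point of `A`
(for the topology `τ`). -/
def IsNetComplete (τ : TopologicalSpace V) (A : Set V) : Prop :=
  ∀ (ι : Type) [Preorder ι] [Nonempty ι],
    (∀ i j : ι, ∃ k, i ≤ k ∧ j ≤ k) →
    ∀ x : ι → V, (∀ i, x i ∈ A) →
      (∀ U ∈ @nhds V τ 0, ∃ i0, ∀ j ≥ i0, ∀ k ≥ i0, x j - x k ∈ U) →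
      ∃ a ∈ A, Filter.Tendsto x Filter.atTop (@nhds V τ a)

/-- `τ` makes `V` a locally convex topological `K`-vector space: it is a vector-space
topology whose filter of neighbourhoods of zero admits a basis of lattices. -/
def IsLCTVS (τ : TopologicalSpace V) : Prop :=
  @IsTopologicalAddGroup V τ _ ∧ @ContinuousSMul K V _ _ τ ∧
    ∀ S ∈ @nhds V τ 0, ∃ Λ : Set V, IsLatticeSet K Λ ∧ Λ ∈ @nhds V τ 0 ∧ Λ ⊆ S

/-- The topological dual of `(V, τ)`: continuous `K`-linear forms, as a set of functions. -/
def dualSet (τ : TopologicalSpace V) : Set (V → K) :=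
  {l | IsLinearMap K l ∧ @Continuous V K τ _ l}

/-- Basic neighbourhoods of zero for the `c`-topology on `V → K`: uniform convergence on
compactoid `𝒪`-submodules. -/
def cTopBasic (τ : TopologicalSpace V) : Set (Set (V → K)) :=
  {S | ∃ (B : Set V) (ε : ℝ), IsOSubmodule K B ∧ IsCompactoid K τ B ∧ 0 < ε ∧
    S = {l : V → K | ∀ x ∈ B, ‖l x‖ ≤ ε}}

/-- The `c`-topology (uniform convergence on compactoid `𝒪`-submodules) on `V → K`. -/
def cTop (τ : TopologicalSpace V) : TopologicalSpace (V → K) :=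
  addTopologyOf (cTopBasic K τ)

/-- The pseudo-polar `A^p = {l ∈ V' : |l(v)| < 1 for all v ∈ A}`. -/
def pseudoPolar (τ : TopologicalSpace V) (A : Set V) : Set (V → K) :=
  {l | l ∈ dualSet K τ ∧ ∀ v ∈ A, ‖l v‖ < 1}

/-- The pseudo-bipolar `A^{pp} = {v ∈ V : |l(v)| < 1 for all l ∈ A^p}`. -/
def pseudoBipolar (τ : TopologicalSpace V) (A : Set V) : Set V :=
  {v | ∀ l ∈ pseudoPolar K τ A, ‖l v‖ < 1}

end LCS

/-! ### The equal characteristic field `K((t))` -/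

/-- Basic neighbourhoods of zero for the higher topology on `K((t))`:
`Σ U_i t^i` where each `U_i` is an open neighbourhood of `0` in `K` and `U_i = K` for all
sufficiently large `i`. -/
def laurentBasic : Set (Set (LaurentSeries K)) :=
  {S | ∃ U : ℤ → Set K, (∀ i, IsOpen (U i) ∧ (0 : K) ∈ U i) ∧
    (∃ N : ℤ, ∀ i, N ≤ i → U i = Set.univ) ∧
    S = {f : LaurentSeries K | ∀ i, f.coeff i ∈ U i}}

/-- The higher topology on `K((t))`. -/
def laurentTop : TopologicalSpace (LaurentSeries K) := addTopologyOf (laurentBasic K)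

/-- `Λ = Σ_{i∈ℤ} 𝔭^{n_i} t^i ⊆ K((t))` for a sequence `(n_i) ⊆ ℤ ∪ {-∞}`. -/
def laurentLambda (q : ℕ) (n : ℤ → WithBot ℤ) : Set (LaurentSeries K) :=
  {f | ∀ i, f.coeff i ∈ pB K q (n i)}

/-- `B = Σ_{i∈ℤ} 𝔭^{k_i} t^i ⊆ K((t))` for a sequence `(k_i) ⊆ ℤ ∪ {∞}`. -/
def laurentPT (q : ℕ) (k : ℤ → WithTop ℤ) : Set (LaurentSeries K) :=
  {f | ∀ i, f.coeff i ∈ pT K q (k i)}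

/-- `A = Σ_{i∈ℤ} 𝔭^{k_i} t^i ⊆ K((t))` for a sequence `(k_i) ⊆ ℤ ∪ {±∞}`. -/
def laurentPE (q : ℕ) (k : ℤ → WithBot (WithTop ℤ)) : Set (LaurentSeries K) :=
  {f | ∀ i, f.coeff i ∈ pE K q (k i)}

/-- The admissible seminorm `‖Σ x_i t^i‖ = max_i ‖x_i‖ q^{n_i}` on `K((t))`. -/
def laurentSeminorm (q : ℕ) (n : ℤ → WithBot ℤ) (f : LaurentSeries K) : ℝ :=
  sSup {r : ℝ | ∃ i : ℤ, r = ‖f.coeff i‖ * qpow q (n i)}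

/-- The ring of integers `K[[t]] ⊆ K((t))`. -/
def laurentIntegers : Set (LaurentSeries K) := {f | ∀ i, i < 0 → f.coeff i = 0}

/-- The rank-two ring of integers `𝒪 + tK[[t]] ⊆ K((t))`. -/
def laurentRankTwo : Set (LaurentSeries K) :=
  {f | (∀ i, i < 0 → f.coeff i = 0) ∧ ‖f.coeff 0‖ ≤ 1}

/-- The pairing `γ(x)(y) = π₀(xy) = Σ_i x_i y_{-i}` on `K((t))`. -/
def laurentPairing (x y : LaurentSeries K) : K := ∑' i : ℤ, x.coeff i * y.coeff (-i)

/-! ### The mixed characteristic field `K{{t}}` -/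

/-- The underlying `K`-vector space of `K{{t}}`: functions `x : ℤ → K` (coefficients of
`Σ x_i t^i`) with `inf_i v_K(x_i) > -∞` (i.e. bounded norms) and `x_i → 0` as `i → -∞`. -/
def mixedCarrier : Submodule K (ℤ → K) where
  carrier := {x | (∃ C : ℝ, ∀ i, ‖x i‖ ≤ C) ∧ Filter.Tendsto x Filter.atBot (nhds (0 : K))}
  zero_mem' := ⟨⟨0, fun i => by simp⟩, tendsto_const_nhds⟩
  add_mem' := by
    rintro x y ⟨⟨C, hC⟩, hx⟩ ⟨⟨D, hD⟩, hy⟩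
    refine ⟨⟨C + D, fun i => (norm_add_le _ _).trans (add_le_add (hC i) (hD i))⟩, ?_⟩
    have hxy := hx.add hy
    rw [add_zero] at hxy
    exact hxy
  smul_mem' := by
    rintro c x ⟨⟨C, hC⟩, hx⟩
    refine ⟨⟨‖c‖ * C, fun i => ?_⟩, ?_⟩
    · have h : ‖(c • x) i‖ = ‖c‖ * ‖x i‖ := by simp [norm_smul]
      rw [h]
      exact mul_le_mul_of_nonneg_left (hC i) (norm_nonneg c)
    · have hcx := hx.const_smul c
      rw [smul_zero] at hcx
      exact hcx

/-- The field `K{{t}}`, as a `K`-vector space. -/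
abbrev Mt := ↥(mixedCarrier K)

/-- Basic neighbourhoods of zero for the higher topology on `K{{t}}`:
`Σ V_i t^i` where each `V_i` is an open neighbourhood of `0` in `K`, some `𝔭^c` is
contained in every `V_i`, and for every `l` eventually `𝔭^l ⊆ V_i`. -/
def mixedBasic (q : ℕ) : Set (Set (Mt K)) :=
  {S | ∃ Vs : ℤ → Set K, (∀ i, IsOpen (Vs i) ∧ (0 : K) ∈ Vs i) ∧
    (∃ c : ℤ, ∀ i, {x : K | ‖x‖ ≤ (q : ℝ) ^ (-c)} ⊆ Vs i) ∧
    (∀ l : ℤ, ∃ i0 : ℤ, ∀ i, i0 ≤ i → {x : K | ‖x‖ ≤ (q : ℝ) ^ (-l)} ⊆ Vs i) ∧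
    S = {f : Mt K | ∀ i, f.1 i ∈ Vs i}}

/-- The higher topology on `K{{t}}`. -/
def mixedTop (q : ℕ) : TopologicalSpace (Mt K) := addTopologyOf (mixedBasic K q)

/-- `Λ = Σ_{i∈ℤ} 𝔭^{n_i} t^i ⊆ K{{t}}` for a sequence `(n_i) ⊆ ℤ ∪ {-∞}`. -/
def mixedLambda (q : ℕ) (n : ℤ → WithBot ℤ) : Set (Mt K) :=
  {f | ∀ i, f.1 i ∈ pB K q (n i)}

/-- `B = Σ_{i∈ℤ} 𝔭^{k_i} t^i ⊆ K{{t}}` for a sequence `(k_i) ⊆ ℤ ∪ {∞}`. -/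
def mixedPT (q : ℕ) (k : ℤ → WithTop ℤ) : Set (Mt K) :=
  {f | ∀ i, f.1 i ∈ pT K q (k i)}

/-- `A = Σ_{i∈ℤ} 𝔭^{k_i} t^i ⊆ K{{t}}` for a sequence `(k_i) ⊆ ℤ ∪ {±∞}`. -/
def mixedPE (q : ℕ) (k : ℤ → WithBot (WithTop ℤ)) : Set (Mt K) :=
  {f | ∀ i, f.1 i ∈ pE K q (k i)}

/-- The admissible seminorm `‖Σ x_i t^i‖ = sup_i ‖x_i‖ q^{n_i}` on `K{{t}}`. -/
def mixedSeminorm (q : ℕ) (n : ℤ → WithBot ℤ) (f : Mt K) : ℝ :=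
  sSup {r : ℝ | ∃ i : ℤ, r = ‖f.1 i‖ * qpow q (n i)}

/-- The ring of integers `𝒪{{t}} ⊆ K{{t}}`. -/
def mixedIntegers : Set (Mt K) := {f | ∀ i, ‖f.1 i‖ ≤ 1}

/-- The rank-two ring of integers `Σ_{i<0} 𝔭 t^i + Σ_{i≥0} 𝒪 t^i ⊆ K{{t}}`. -/
def mixedRankTwo (q : ℕ) : Set (Mt K) :=
  {f | (∀ i : ℤ, i < 0 → ‖f.1 i‖ ≤ ((q : ℝ))⁻¹) ∧ ∀ i : ℤ, 0 ≤ i → ‖f.1 i‖ ≤ 1}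

/-- The monomial `t^i ∈ K{{t}}`. -/
def mixedT (i : ℤ) : Mt K :=
  ⟨fun j => if j = i then 1 else 0,
    ⟨⟨1, fun j => by by_cases h : j = i <;> simp [h]⟩, by
      refine (tendsto_const_nhds : Filter.Tendsto (fun _ : ℤ => (0 : K))
        Filter.atBot (nhds 0)).congr' ?_
      filter_upwards [Filter.eventually_le_atBot (i - 1)] with j hj
      have h : j ≠ i := by omega
      simp [h]⟩⟩

/-- Coefficients of the product of two elements of `K{{t}}` (Cauchy product). -/
def mixedMulCoeff (x y : Mt K) : ℤ → K := fun k => ∑' i : ℤ, x.1 i * y.1 (k - i)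

/-- Multiplication on `K{{t}}`. -/
def mixedMul (x y : Mt K) : Mt K :=
  if h : mixedMulCoeff K x y ∈ mixedCarrier K then ⟨_, h⟩ else 0

/-- The pairing `γ(x)(y) = π₀(xy) = Σ_i x_i y_{-i}` on `K{{t}}`. -/
def mixedPairing (x y : Mt K) : K := ∑' i : ℤ, x.1 i * y.1 (-i)

/-!
Every open lattice of `K{{t}}` contains a basic neighbourhood `Σ V_i t^i` with `𝔭^c ⊆ V_i` for
all `i`, and a suitable power of a uniformizer carries `Σ 𝔭^d t^i` into it.

Conversely, a bounded set is absorbed by every lattice `Σ 𝔭^{n_i} t^i` with `n_i ≤ 0` and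
`n_i → -∞`; these are open because closed balls of a nonarchimedean field are open. Taking
`n_i = 0` for `i ≤ N` and `n_i = -∞` beyond bounds the coefficients of index `≤ N` uniformly.
If the coefficients were still unbounded, there would be indices `j_0 < j_1 < ⋯` at which some
element has a coefficient of norm `> q^{2m}`, and `n_i = -max {m : j_m ≤ i}` would give a lattice
absorbing the set only with a factor `> q^m` for every `m`.
-/

lemma isOpen_addTopologyOf_of_mem {W : Type} [AddCommGroup W] {B : Set (Set W)} {S : Set W}
    (hS : S ∈ B) (hadd : ∀ x ∈ S, ∀ y ∈ S, x + y ∈ S) : IsOpen[addTopologyOf B] S := by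
  intro x hx
  exact mem_map.2 (mem_of_superset (mem_iInf_of_mem S (mem_iInf_of_mem hS (mem_principal_self S)))
    (hadd x hx))

lemma exists_mem_subset_of_isOpen_addTopologyOf {W : Type} [AddCommGroup W]
    {B : Set (Set W)} (hB : B.Nonempty) (hinter : ∀ U ∈ B, ∀ V ∈ B, U ∩ V ∈ B)
    {S : Set W} (hS : IsOpen[addTopologyOf B] S) (h0 : (0 : W) ∈ S) : ∃ U ∈ B, U ⊆ S := by
  have hdir : DirectedOn ((fun U : Set W => 𝓟 U) ⁻¹'o (· ≥ ·)) B := fun U hU V hV =>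
    ⟨U ∩ V, hinter U hU V hV, principal_mono.2 inter_subset_left,
      principal_mono.2 inter_subset_right⟩
  have h := mem_map.1 (hS 0 h0)
  simp only [zero_add, preimage_id'] at h
  obtain ⟨U, hU, hUS⟩ := (mem_biInf_of_directed hdir hB).1 h
  exact ⟨U, hU, mem_principal.1 hUS⟩

lemma exists_forall_le_of_forall_le_mul_pow {ι : Type*} {s : Set ι} {u : ι → ℤ → ℝ} {r : ℝ}
    (hr : 1 < r) (hle : ∀ N : ℤ, ∃ C : ℝ, ∀ x ∈ s, ∀ i ≤ N, u x i ≤ C)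
    (hweight : ∀ w : ℤ → ℕ, Tendsto w atTop atTop → ∃ C : ℝ, ∀ x ∈ s, ∀ i, u x i ≤ C * r ^ w i) :
    ∃ C : ℝ, ∀ x ∈ s, ∀ i, u x i ≤ C := by
  by_contra! hunb
  have hfreq (m : ℕ) : ∃ᶠ k : ℕ in atTop, ∃ x ∈ s, r ^ (2 * m) < u x k := by
    refine frequently_atTop'.2 fun N => ?_
    obtain ⟨C, hC⟩ := hle N
    obtain ⟨x, hx, i, hi⟩ := hunb (max C (r ^ (2 * m)))
    have hNi : (N : ℤ) < i := not_le.1 fun h => (hC x hx i h).not_gt ((le_max_left _ _).trans_lt hi)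
    refine ⟨i.toNat, by omega, x, hx, ?_⟩
    rw [Int.toNat_of_nonneg (by omega)]
    exact (le_max_right _ _).trans_lt hi
  obtain ⟨j, hj, hbig⟩ := extraction_forall_of_frequently hfreq
  let w : ℤ → ℕ := fun i => Nat.findGreatest (fun m => (j m : ℤ) ≤ i) i.toNat
  have hw_le (m : ℕ) : w (j m) ≤ m := by
    have hspec : (j (w (j m)) : ℤ) ≤ j m :=
      Nat.findGreatest_spec (P := fun k => (j k : ℤ) ≤ j m) (by simpa using hj.id_le m) le_rfl
    exact hj.le_iff_le.1 (by exact_mod_cast hspec)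
  have hw : Tendsto w atTop atTop := tendsto_atTop.2 fun m =>
    (eventually_ge_atTop (j m : ℤ)).mono fun i hi =>
      Nat.le_findGreatest (by have : (m : ℤ) ≤ j m := mod_cast hj.id_le m; omega) hi
  obtain ⟨C, hC⟩ := hweight w hw
  obtain ⟨m, hm⟩ := pow_unbounded_of_one_lt (max C 0) hr
  obtain ⟨x, hx, hxm⟩ := hbig m
  have := calc r ^ (2 * m) < u x (j m) := hxm
    _ ≤ C * r ^ w (j m) := hC x hx _
    _ ≤ max C 0 * r ^ m := by
      gcongr
      exacts [le_max_left C 0, hr.le, hw_le m]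
    _ < r ^ m * r ^ m := by gcongr
  rw [← pow_add, ← two_mul] at this
  exact this.false

section Bornology

variable {K} {q : ℕ}

lemma IsCharZeroLocalField.one_lt_cast (hK : IsCharZeroLocalField K q) : (1 : ℝ) < q := by
  exact_mod_cast hK.one_lt_q

lemma IsCharZeroLocalField.isOpen_setOf_norm_le (hK : IsCharZeroLocalField K q) (m : ℤ) :
    IsOpen {x : K | ‖x‖ ≤ (q : ℝ) ^ (-m)} := by
  have := IsUltrametricDist.isUltrametricDist_of_forall_norm_add_le_max_norm hK.nonarch
  have hr : (q : ℝ) ^ (-m) ≠ 0 := (zpow_pos (by linarith [hK.one_lt_cast]) _).ne'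
  simpa [Metric.closedBall] using IsUltrametricDist.isOpen_closedBall (0 : K) hr

lemma isOpen_pB (hK : IsCharZeroLocalField K q) (n : WithBot ℤ) : IsOpen (pB K q n) := by
  induction n using WithBot.recBotCoe with
  | bot => exact isOpen_univ
  | coe m => exact hK.isOpen_setOf_norm_le m

lemma zero_mem_pB (n : WithBot ℤ) : (0 : K) ∈ pB K q n := by
  induction n using WithBot.recBotCoe with
  | bot => trivial
  | coe m => exact (norm_zero (E := K)).trans_le (by positivity)

lemma add_mem_pB (hK : IsCharZeroLocalField K q) {n : WithBot ℤ} {x y : K}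
    (hx : x ∈ pB K q n) (hy : y ∈ pB K q n) : x + y ∈ pB K q n := by
  induction n using WithBot.recBotCoe with
  | bot => trivial
  | coe m => exact (hK.nonarch x y).trans (max_le hx hy)

lemma smul_mem_pB {n : WithBot ℤ} {c x : K} (hc : ‖c‖ ≤ 1) (hx : x ∈ pB K q n) :
    c • x ∈ pB K q n := by
  induction n using WithBot.recBotCoe with
  | bot => trivial
  | coe m =>
      show ‖c • x‖ ≤ _
      rw [norm_smul]
      exact (mul_le_of_le_one_left (norm_nonneg x) hc).trans hx

lemma setOf_norm_le_subset_pB (hK : IsCharZeroLocalField K q) {n : WithBot ℤ} {c : ℤ}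
    (h : n ≤ c) : {x : K | ‖x‖ ≤ (q : ℝ) ^ (-c)} ⊆ pB K q n := by
  induction n using WithBot.recBotCoe with
  | bot => exact subset_univ _
  | coe m =>
      have hmc : m ≤ c := by exact_mod_cast h
      exact fun x hx => hx.trans (zpow_le_zpow_right₀ hK.one_lt_cast.le (by omega))

lemma norm_le_of_mem_pT (hK : IsCharZeroLocalField K q) {m : WithTop ℤ} {d : ℤ}
    (h : (d : WithTop ℤ) ≤ m) {x : K} (hx : x ∈ pT K q m) : ‖x‖ ≤ (q : ℝ) ^ (-d) := by
  induction m using WithTop.recTopCoe with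
  | top =>
      rw [show x = 0 from hx, norm_zero]
      positivity
  | coe m =>
      have hdm : d ≤ m := by exact_mod_cast h
      exact (show ‖x‖ ≤ (q : ℝ) ^ (-m) from hx).trans
        (zpow_le_zpow_right₀ hK.one_lt_cast.le (by omega))

lemma univ_mem_mixedBasic : (univ : Set (Mt K)) ∈ mixedBasic K q :=
  ⟨fun _ => univ, fun _ => ⟨isOpen_univ, trivial⟩, ⟨0, fun _ => subset_univ _⟩,
    fun _ => ⟨0, fun _ _ => subset_univ _⟩, by simp⟩

lemma inter_mem_mixedBasic (hK : IsCharZeroLocalField K q) {U V : Set (Mt K)}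
    (hU : U ∈ mixedBasic K q) (hV : V ∈ mixedBasic K q) : U ∩ V ∈ mixedBasic K q := by
  obtain ⟨Us, hUs, ⟨c, hc⟩, hUl, rfl⟩ := hU
  obtain ⟨Vs, hVs, ⟨c', hc'⟩, hVl, rfl⟩ := hV
  have hball {a b : ℤ} (hab : a ≤ b) :
      {x : K | ‖x‖ ≤ (q : ℝ) ^ (-b)} ⊆ {x : K | ‖x‖ ≤ (q : ℝ) ^ (-a)} :=
    fun x hx => hx.trans (zpow_le_zpow_right₀ hK.one_lt_cast.le (by omega))
  refine ⟨fun i => Us i ∩ Vs i, fun i => ⟨(hUs i).1.inter (hVs i).1, (hUs i).2, (hVs i).2⟩,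
    ⟨max c c', fun i => subset_inter ((hball (le_max_left c c')).trans (hc i))
      ((hball (le_max_right c c')).trans (hc' i))⟩, fun l => ?_, ?_⟩
  · obtain ⟨i₀, hi₀⟩ := hUl l
    obtain ⟨i₀', hi₀'⟩ := hVl l
    exact ⟨max i₀ i₀', fun i hi => subset_inter (hi₀ i ((le_max_left _ _).trans hi))
      (hi₀' i ((le_max_right _ _).trans hi))⟩
  · ext f
    simp only [mem_inter_iff, mem_ofPred_eq, forall_and]

lemma exists_mixedBasic_subset (hK : IsCharZeroLocalField K q) {S : Set (Mt K)}
    (hS : IsOpen[mixedTop K q] S) (h0 : (0 : Mt K) ∈ S) : ∃ U ∈ mixedBasic K q, U ⊆ S :=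
  exists_mem_subset_of_isOpen_addTopologyOf ⟨univ, univ_mem_mixedBasic⟩
    (fun _ hU _ hV => inter_mem_mixedBasic hK hU hV) hS h0

section Lambda

variable {n : ℤ → WithBot ℤ}

lemma add_mem_mixedLambda (hK : IsCharZeroLocalField K q) {f g : Mt K}
    (hf : f ∈ mixedLambda K q n) (hg : g ∈ mixedLambda K q n) : f + g ∈ mixedLambda K q n :=
  fun i => add_mem_pB hK (hf i) (hg i)

lemma isLatticeSet_mixedLambda (hK : IsCharZeroLocalField K q) (hn0 : ∀ i, n i ≤ (0 : ℤ)) :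
    IsLatticeSet K (mixedLambda K q n) := by
  refine ⟨⟨fun i => zero_mem_pB (n i), fun f hf g hg => add_mem_mixedLambda hK hf hg,
    fun c hc f hf i => smul_mem_pB hc (hf i)⟩, fun v => ?_⟩
  obtain ⟨⟨C, hC⟩, -⟩ := v.2
  obtain ⟨π, hπ⟩ := hK.exists_uniformizer
  have hq : (0 : ℝ) < q := zero_lt_one.trans hK.one_lt_cast
  obtain ⟨e, he⟩ := pow_unbounded_of_one_lt C hK.one_lt_cast
  refine ⟨π ^ e, pow_ne_zero e (norm_pos_iff.1 (hπ ▸ inv_pos.2 hq)), fun i => ?_⟩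
  apply setOf_norm_le_subset_pB hK (hn0 i)
  show ‖π ^ e * v.1 i‖ ≤ (q : ℝ) ^ (-(0 : ℤ))
  rw [norm_mul, norm_pow, hπ, inv_pow, neg_zero, zpow_zero, inv_mul_le_iff₀ (by positivity),
    mul_one]
  exact (hC i).trans he.le

lemma isOpen_mixedLambda (hK : IsCharZeroLocalField K q) (hn0 : ∀ i, n i ≤ (0 : ℤ))
    (hn : ∀ l : ℤ, ∀ᶠ i in atTop, n i ≤ l) : IsOpen[mixedTop K q] (mixedLambda K q n) := by
  refine isOpen_addTopologyOf_of_mem ⟨fun i => pB K q (n i),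
    fun i => ⟨isOpen_pB hK (n i), zero_mem_pB (n i)⟩,
    ⟨0, fun i => setOf_norm_le_subset_pB hK (hn0 i)⟩, fun l => ?_, rfl⟩
    (fun f hf g hg => add_mem_mixedLambda hK hf hg)
  obtain ⟨i₀, hi₀⟩ := eventually_atTop.1 (hn l)
  exact ⟨i₀, fun i hi => setOf_norm_le_subset_pB hK (hi₀ i hi)⟩

lemma norm_coeff_le_of_mem_smul_mixedLambda {a : K} {f : Mt K}
    (hf : f ∈ a • mixedLambda K q n) {i m : ℤ} (hi : n i = m) :
    ‖f.1 i‖ ≤ ‖a‖ * (q : ℝ) ^ (-m) := by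
  obtain ⟨g, hg, rfl⟩ := mem_smul_set.1 hf
  have hgi : g.1 i ∈ pB K q m := hi ▸ hg i
  exact (norm_mul a (g.1 i)).trans_le (mul_le_mul_of_nonneg_left hgi (norm_nonneg a))

lemma IsVNBounded.exists_forall_norm_coeff_le_of_mixedLambda (hK : IsCharZeroLocalField K q)
    {B : Set (Mt K)} (hB : IsVNBounded K (mixedTop K q) B) (hn0 : ∀ i, n i ≤ (0 : ℤ))
    (hn : ∀ l : ℤ, ∀ᶠ i in atTop, n i ≤ l) :
    ∃ C : ℝ, ∀ f ∈ B, ∀ i (m : ℤ), n i = m → ‖f.1 i‖ ≤ C * (q : ℝ) ^ (-m) := by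
  obtain ⟨a, ha⟩ := hB _ (isLatticeSet_mixedLambda hK hn0) (isOpen_mixedLambda hK hn0 hn)
  exact ⟨‖a‖, fun f hf i m hi => norm_coeff_le_of_mem_smul_mixedLambda (ha hf) hi⟩

end Lambda

lemma IsVNBounded.exists_forall_norm_coeff_le_of_le (hK : IsCharZeroLocalField K q)
    {B : Set (Mt K)} (hB : IsVNBounded K (mixedTop K q) B) (N : ℤ) :
    ∃ C : ℝ, ∀ f ∈ B, ∀ i ≤ N, ‖f.1 i‖ ≤ C := by
  obtain ⟨C, hC⟩ := hB.exists_forall_norm_coeff_le_of_mixedLambda hK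
    (n := fun i => if i ≤ N then ((0 : ℤ) : WithBot ℤ) else ⊥)
    (fun i => by split_ifs <;> simp)
    (fun l => (eventually_gt_atTop N).mono fun i hi => by simp [not_le.2 hi])
  exact ⟨C, fun f hf i hi => by simpa using hC f hf i 0 (if_pos hi)⟩

lemma IsVNBounded.exists_forall_norm_coeff_le_mul_pow (hK : IsCharZeroLocalField K q)
    {B : Set (Mt K)} (hB : IsVNBounded K (mixedTop K q) B) {w : ℤ → ℕ}
    (hw : Tendsto w atTop atTop) : ∃ C : ℝ, ∀ f ∈ B, ∀ i, ‖f.1 i‖ ≤ C * (q : ℝ) ^ w i := by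
  obtain ⟨C, hC⟩ := hB.exists_forall_norm_coeff_le_of_mixedLambda hK
    (n := fun i => ((-(w i : ℤ) : ℤ) : WithBot ℤ))
    (fun i => by exact_mod_cast neg_nonpos.2 (Int.natCast_nonneg (w i)))
    (fun l => (tendsto_atTop.1 hw (-l).toNat).mono fun i hi => by exact_mod_cast (by omega))
  exact ⟨C, fun f hf i => by simpa using hC f hf i _ rfl⟩

theorem isVNBounded_mixedPT (hK : IsCharZeroLocalField K q) {k : ℤ → WithTop ℤ}
    (hk : ∃ d : ℤ, ∀ i, (d : WithTop ℤ) ≤ k i) : IsVNBounded K (mixedTop K q) (mixedPT K q k) := by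
  obtain ⟨d, hd⟩ := hk
  intro Λ hΛ hΛo
  obtain ⟨-, ⟨Vs, -, ⟨c, hc⟩, -, rfl⟩, hΛ⟩ := exists_mixedBasic_subset hK hΛo hΛ.1.1
  obtain ⟨π, hπ⟩ := hK.exists_uniformizer
  have hq : (0 : ℝ) < q := zero_lt_one.trans hK.one_lt_cast
  have hπ0 : π ≠ 0 := norm_pos_iff.1 (hπ ▸ inv_pos.2 hq)
  refine ⟨π ^ (d - c), fun f hf => smul_set_mono hΛ ?_⟩
  rw [mem_smul_set_iff_inv_smul_mem₀ (zpow_ne_zero _ hπ0)]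
  refine fun i => hc i ?_
  show ‖(π ^ (d - c))⁻¹ * f.1 i‖ ≤ (q : ℝ) ^ (-c)
  calc ‖(π ^ (d - c))⁻¹ * f.1 i‖ = (q : ℝ) ^ (d - c) * ‖f.1 i‖ := by
        rw [norm_mul, norm_inv, norm_zpow, hπ, inv_zpow, inv_inv]
    _ ≤ (q : ℝ) ^ (d - c) * (q : ℝ) ^ (-d) := by gcongr; exact norm_le_of_mem_pT hK (hd i) (hf i)
    _ = (q : ℝ) ^ (-c) := by rw [← zpow_add₀ hq.ne']; ring_nf

theorem IsVNBounded.exists_subset_mixedPT (hK : IsCharZeroLocalField K q) {B : Set (Mt K)}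
    (hB : IsVNBounded K (mixedTop K q) B) :
    ∃ k : ℤ → WithTop ℤ, (∃ d : ℤ, ∀ i, (d : WithTop ℤ) ≤ k i) ∧ B ⊆ mixedPT K q k := by
  obtain ⟨C, hC⟩ := exists_forall_le_of_forall_le_mul_pow (u := fun (f : Mt K) i => ‖f.1 i‖)
    hK.one_lt_cast (hB.exists_forall_norm_coeff_le_of_le hK)
    (fun _ hw => hB.exists_forall_norm_coeff_le_mul_pow hK hw)
  obtain ⟨e, he⟩ := pow_unbounded_of_one_lt C hK.one_lt_cast
  refine ⟨fun _ => ((-e : ℤ) : WithTop ℤ), ⟨-e, fun _ => le_rfl⟩, fun f hf i => ?_⟩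
  show ‖f.1 i‖ ≤ (q : ℝ) ^ (-(-e : ℤ))
  rw [neg_neg, zpow_natCast]
  exact (hC f hf i).trans he.le

end Bornology

/-- For any sequence `(k_i) ⊆ ℤ ∪ {∞}` which is bounded below, the
`𝒪`-submodule `B = Σ_{i∈ℤ} 𝔭^{k_i} t^i ⊆ K{{t}}` is bounded for the higher topology;
conversely every bounded subset of `K{{t}}` is contained in a submodule of this form. Hence
these submodules form a basis of the Von-Neumann bornology of `K{{t}}`. -/
theorem statement9 (q : ℕ) (hK : IsCharZeroLocalField K q) :
    (∀ k : ℤ → WithTop ℤ, (∃ d : ℤ, ∀ i : ℤ, (d : WithTop ℤ) ≤ k i) →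
      IsVNBounded K (mixedTop K q) (mixedPT K q k)) ∧
    (∀ B : Set (Mt K), IsVNBounded K (mixedTop K q) B →
      ∃ k : ℤ → WithTop ℤ, (∃ d : ℤ, ∀ i : ℤ, (d : WithTop ℤ) ≤ k i) ∧
        B ⊆ mixedPT K q k) :=
  ⟨fun _ hk => isVNBounded_mixedPT hK hk, fun _ hB => hB.exists_subset_mixedPT hK⟩

end TwoDimLF
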